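/- arXiv:1502.02044 — 3 statements merged into one kernel-verified Lean document; each statement's English description precedes it below -/
import Mathlib

section
/- Let A and B be types, let M_A and M_B be Coxeter matrices on A and B respectively, let C ⊆ A and C ⊆ B be a common subset with M_A and M_B agreeing on C, and let M be the Coxeter matrix on the union S = A ∪ B that restricts to M_A on A, to M_B on B, and has M a b = 0 for every a ∈ A ∖ B and b ∈ B ∖ A. Then the Coxeter group W(M) is isomorphic to the amalgamated free product W(M|_A) ∗_{W(M|_C)} W(M|_B), i.e. to the pushout of the canonical group homomorphisms W(M|_C) → W(M|_A) and W(M|_C) → W(M|_B) induced by the inclusions of generating sets, via an isomorphism matching generators with generators. -/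
/-!
Both groups are generated by copies of `S` subject to relations that match: the amalgam
`W(M|_A) ∗_{W(M|_{A ∩ B})} W(M|_B)` is generated by the generators of `W(M|_A)` and `W(M|_B)`,
with the two copies of a generator in `A ∩ B` identified through the amalgamated subgroup,
and it satisfies every Coxeter relation of `M` between two generators lying in a common side;
the only pairs `s, t` not in a common side have `M s t = 0`, i.e. carry no relation. So
generators to generators defines homomorphisms in both directions, and they are inverse to
each other because they are so on generators.
-/

/-- The restriction of a Coxeter matrix on `S` to a subset `T ⊆ S`. -/
def CoxeterMatrix.restrict {S : Type*} (M : CoxeterMatrix S) (T : Set S) :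
    CoxeterMatrix T where
  M := fun a b => M a.1 b.1
  isSymm := Matrix.IsSymm.ext fun a b => M.symmetric b.1 a.1
  diagonal := fun a => M.diagonal a.1
  off_diagonal := fun a b hab => M.off_diagonal a.1 b.1 fun h => hab (Subtype.ext h)

/-- The canonical group homomorphism `W(M|_T) →* W(M|_T')` induced by an inclusion
`T ⊆ T'` of generating sets: it sends a simple reflection to a simple reflection. -/
def coxeterParabolicMap {S : Type*} (M : CoxeterMatrix S) {T T' : Set S} (h : T ⊆ T') :
    (M.restrict T).Group →* (M.restrict T').Group :=
  (M.restrict T).toCoxeterSystem.lift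
    ⟨fun c => (M.restrict T').simple ⟨c.1, h c.2⟩,
     fun i i' =>
       (M.restrict T').toCoxeterSystem.simple_mul_simple_pow ⟨i.1, h i.2⟩ ⟨i'.1, h i'.2⟩⟩

/-- The `Bool`-indexed family consisting of the two groups `W(M|_A)` and `W(M|_B)`. -/
def coxeterPushoutFam {S : Type*} (M : CoxeterMatrix S) (A B : Set S) : Bool → Type _
  | true => (M.restrict A).Group
  | false => (M.restrict B).Group

instance {S : Type*} (M : CoxeterMatrix S) (A B : Set S) :
    ∀ b, Group (coxeterPushoutFam M A B b)
  | true => inferInstanceAs (Group (M.restrict A).Group)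
  | false => inferInstanceAs (Group (M.restrict B).Group)

/-- The two canonical homomorphisms `W(M|_{A ∩ B}) →* W(M|_A)` and
`W(M|_{A ∩ B}) →* W(M|_B)` induced by the inclusions of generating sets. -/
def coxeterPushoutMaps {S : Type*} (M : CoxeterMatrix S) (A B : Set S) :
    ∀ b : Bool, (M.restrict (A ∩ B)).Group →* coxeterPushoutFam M A B b
  | true => coxeterParabolicMap M Set.inter_subset_left
  | false => coxeterParabolicMap M Set.inter_subset_right

theorem CoxeterSystem.map_simple_mul_simple_pow {B W G : Type*} [Group W] [Monoid G]
    {M : CoxeterMatrix B} (cs : CoxeterSystem M W) (φ : W →* G) (i i' : B) :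
    (φ (cs.simple i) * φ (cs.simple i')) ^ M i i' = 1 := by
  rw [← map_mul, ← map_pow, cs.simple_mul_simple_pow, map_one]

section

variable {S : Type*} (M : CoxeterMatrix S)

theorem coxeterParabolicMap_simple {T T' : Set S} (h : T ⊆ T') (c : T) :
    coxeterParabolicMap M h ((M.restrict T).simple c) = (M.restrict T').simple ⟨c.1, h c.2⟩ :=
  (M.restrict T).toCoxeterSystem.lift_apply_simple _ c

def coxeterParabolicInclusion (T : Set S) : (M.restrict T).Group →* M.Group :=
  (M.restrict T).toCoxeterSystem.lift
    ⟨fun c => M.simple c.1, fun i i' => M.toCoxeterSystem.simple_mul_simple_pow i.1 i'.1⟩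

@[simp]
theorem coxeterParabolicInclusion_simple (T : Set S) (c : T) :
    coxeterParabolicInclusion M T ((M.restrict T).simple c) = M.simple c.1 :=
  (M.restrict T).toCoxeterSystem.lift_apply_simple _ c

theorem coxeterParabolicInclusion_comp_coxeterParabolicMap {T T' : Set S} (h : T ⊆ T') :
    (coxeterParabolicInclusion M T').comp (coxeterParabolicMap M h) =
      coxeterParabolicInclusion M T :=
  (M.restrict T).toCoxeterSystem.ext_simple fun c => by
    simp [coxeterParabolicMap_simple]

end

section

open Monoid PushoutI

variable {S : Type*} (M : CoxeterMatrix S) (A B : Set S)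

def coxeterPushoutInclusions : ∀ i, coxeterPushoutFam M A B i →* M.Group
  | true => coxeterParabolicInclusion M A
  | false => coxeterParabolicInclusion M B

def coxeterPushoutToGroup : PushoutI (coxeterPushoutMaps M A B) →* M.Group :=
  lift (coxeterPushoutInclusions M A B) (coxeterParabolicInclusion M (A ∩ B)) fun
    | true => coxeterParabolicInclusion_comp_coxeterParabolicMap M Set.inter_subset_left
    | false => coxeterParabolicInclusion_comp_coxeterParabolicMap M Set.inter_subset_right

theorem coxeterPushoutToGroup_of_true_simple (c : A) :
    coxeterPushoutToGroup M A B
      (of (φ := coxeterPushoutMaps M A B) true ((M.restrict A).simple c)) = M.simple c.1 :=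
  (lift_of (φ := coxeterPushoutMaps M A B) _ _ _ _).trans
    (coxeterParabolicInclusion_simple M A c)

theorem coxeterPushoutToGroup_of_false_simple (c : B) :
    coxeterPushoutToGroup M A B
      (of (φ := coxeterPushoutMaps M A B) false ((M.restrict B).simple c)) = M.simple c.1 :=
  (lift_of (φ := coxeterPushoutMaps M A B) _ _ _ _).trans
    (coxeterParabolicInclusion_simple M B c)

theorem coxeterPushoutMaps_true_simple (c : ↥(A ∩ B)) :
    coxeterPushoutMaps M A B true ((M.restrict (A ∩ B)).simple c) =
      (M.restrict A).simple ⟨c.1, c.2.1⟩ :=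
  coxeterParabolicMap_simple M Set.inter_subset_left c

theorem coxeterPushoutMaps_false_simple (c : ↥(A ∩ B)) :
    coxeterPushoutMaps M A B false ((M.restrict (A ∩ B)).simple c) =
      (M.restrict B).simple ⟨c.1, c.2.2⟩ :=
  coxeterParabolicMap_simple M Set.inter_subset_right c

theorem coxeterPushout_of_true_simple_eq_of_false_simple {s : S} (hA : s ∈ A) (hB : s ∈ B) :
    of (φ := coxeterPushoutMaps M A B) true ((M.restrict A).simple ⟨s, hA⟩) =
      of (φ := coxeterPushoutMaps M A B) false ((M.restrict B).simple ⟨s, hB⟩) := by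
  have h := (of_apply_eq_base (coxeterPushoutMaps M A B) true
    ((M.restrict (A ∩ B)).simple ⟨s, hA, hB⟩)).trans
      (of_apply_eq_base (coxeterPushoutMaps M A B) false _).symm
  rwa [coxeterPushoutMaps_true_simple, coxeterPushoutMaps_false_simple] at h

end

section

open Monoid PushoutI

variable {S : Type*} (M : CoxeterMatrix S) {A B : Set S}

theorem coxeterMatrix_eq_zero_of_separated (hunion : A ∪ B = Set.univ)
    (hzero : ∀ a ∈ A \ B, ∀ b ∈ B \ A, M a b = 0)
    {s t : S} (hA : ¬(s ∈ A ∧ t ∈ A)) (hB : ¬(s ∈ B ∧ t ∈ B)) : M s t = 0 := by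
  rcases Set.eq_univ_iff_forall.1 hunion s with hs | hs <;>
    rcases Set.eq_univ_iff_forall.1 hunion t with ht | ht
  · exact absurd ⟨hs, ht⟩ hA
  · exact hzero s ⟨hs, fun hs' => hB ⟨hs', ht⟩⟩ t ⟨ht, fun ht' => hA ⟨hs, ht'⟩⟩
  · rw [M.symmetric]
    exact hzero t ⟨ht, fun ht' => hB ⟨hs, ht'⟩⟩ s ⟨hs, fun hs' => hA ⟨hs', ht⟩⟩
  · exact absurd ⟨hs, ht⟩ hB

open Classical in
noncomputable def coxeterPushoutSimple (hunion : A ∪ B = Set.univ) (s : S) :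
    PushoutI (coxeterPushoutMaps M A B) :=
  if h : s ∈ A then of true ((M.restrict A).simple ⟨s, h⟩)
  else of false ((M.restrict B).simple ⟨s, (Set.eq_univ_iff_forall.1 hunion s).resolve_left h⟩)

theorem coxeterPushoutSimple_of_mem_left (hunion : A ∪ B = Set.univ) {s : S} (hs : s ∈ A) :
    coxeterPushoutSimple M hunion s =
      of (φ := coxeterPushoutMaps M A B) true ((M.restrict A).simple ⟨s, hs⟩) :=
  dif_pos hs

theorem coxeterPushoutSimple_of_mem_right (hunion : A ∪ B = Set.univ) {s : S} (hs : s ∈ B) :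
    coxeterPushoutSimple M hunion s =
      of (φ := coxeterPushoutMaps M A B) false ((M.restrict B).simple ⟨s, hs⟩) := by
  by_cases hA : s ∈ A
  · rw [coxeterPushoutSimple_of_mem_left M hunion hA,
      coxeterPushout_of_true_simple_eq_of_false_simple M A B hA hs]
  · exact dif_neg hA

theorem coxeterPushoutSimple_isLiftable (hunion : A ∪ B = Set.univ)
    (hzero : ∀ a ∈ A \ B, ∀ b ∈ B \ A, M a b = 0) :
    M.IsLiftable (coxeterPushoutSimple M hunion) := by
  intro s t
  by_cases hA : s ∈ A ∧ t ∈ A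
  · rw [coxeterPushoutSimple_of_mem_left M hunion hA.1,
      coxeterPushoutSimple_of_mem_left M hunion hA.2]
    exact (M.restrict A).toCoxeterSystem.map_simple_mul_simple_pow
      (of (φ := coxeterPushoutMaps M A B) true) ⟨s, hA.1⟩ ⟨t, hA.2⟩
  by_cases hB : s ∈ B ∧ t ∈ B
  · rw [coxeterPushoutSimple_of_mem_right M hunion hB.1,
      coxeterPushoutSimple_of_mem_right M hunion hB.2]
    exact (M.restrict B).toCoxeterSystem.map_simple_mul_simple_pow
      (of (φ := coxeterPushoutMaps M A B) false) ⟨s, hB.1⟩ ⟨t, hB.2⟩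
  rw [coxeterMatrix_eq_zero_of_separated M hunion hzero hA hB, pow_zero]

noncomputable def coxeterGroupToPushout (hunion : A ∪ B = Set.univ)
    (hzero : ∀ a ∈ A \ B, ∀ b ∈ B \ A, M a b = 0) :
    M.Group →* PushoutI (coxeterPushoutMaps M A B) :=
  M.toCoxeterSystem.lift ⟨_, coxeterPushoutSimple_isLiftable M hunion hzero⟩

theorem coxeterGroupToPushout_simple (hunion : A ∪ B = Set.univ)
    (hzero : ∀ a ∈ A \ B, ∀ b ∈ B \ A, M a b = 0) (s : S) :
    coxeterGroupToPushout M hunion hzero (M.simple s) = coxeterPushoutSimple M hunion s :=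
  M.toCoxeterSystem.lift_apply_simple _ s

theorem coxeterPushoutToGroup_comp_coxeterGroupToPushout (hunion : A ∪ B = Set.univ)
    (hzero : ∀ a ∈ A \ B, ∀ b ∈ B \ A, M a b = 0) :
    (coxeterPushoutToGroup M A B).comp (coxeterGroupToPushout M hunion hzero) =
      MonoidHom.id M.Group := by
  refine M.toCoxeterSystem.ext_simple fun s => ?_
  show coxeterPushoutToGroup M A B (coxeterGroupToPushout M hunion hzero (M.simple s)) = M.simple s
  rcases Set.eq_univ_iff_forall.1 hunion s with hs | hs
  · rw [coxeterGroupToPushout_simple, coxeterPushoutSimple_of_mem_left M hunion hs,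
      coxeterPushoutToGroup_of_true_simple]
  · rw [coxeterGroupToPushout_simple, coxeterPushoutSimple_of_mem_right M hunion hs,
      coxeterPushoutToGroup_of_false_simple]

theorem coxeterGroupToPushout_comp_coxeterPushoutToGroup (hunion : A ∪ B = Set.univ)
    (hzero : ∀ a ∈ A \ B, ∀ b ∈ B \ A, M a b = 0) :
    (coxeterGroupToPushout M hunion hzero).comp (coxeterPushoutToGroup M A B) =
      MonoidHom.id (PushoutI (coxeterPushoutMaps M A B)) := by
  refine hom_ext_nonempty fun
    | true => (M.restrict A).toCoxeterSystem.ext_simple fun c => ?_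
    | false => (M.restrict B).toCoxeterSystem.ext_simple fun c => ?_
  · show coxeterGroupToPushout M hunion hzero (coxeterPushoutToGroup M A B
        (of (φ := coxeterPushoutMaps M A B) true ((M.restrict A).simple c))) =
      of true ((M.restrict A).simple c)
    rw [coxeterPushoutToGroup_of_true_simple, coxeterGroupToPushout_simple,
      coxeterPushoutSimple_of_mem_left M hunion c.2]
  · show coxeterGroupToPushout M hunion hzero (coxeterPushoutToGroup M A B
        (of (φ := coxeterPushoutMaps M A B) false ((M.restrict B).simple c))) =
      of false ((M.restrict B).simple c)
    rw [coxeterPushoutToGroup_of_false_simple, coxeterGroupToPushout_simple,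
      coxeterPushoutSimple_of_mem_right M hunion c.2]

noncomputable def coxeterGroupEquivPushout (hunion : A ∪ B = Set.univ)
    (hzero : ∀ a ∈ A \ B, ∀ b ∈ B \ A, M a b = 0) :
    M.Group ≃* PushoutI (coxeterPushoutMaps M A B) :=
  (coxeterGroupToPushout M hunion hzero).toMulEquiv (coxeterPushoutToGroup M A B)
    (coxeterPushoutToGroup_comp_coxeterGroupToPushout M hunion hzero)
    (coxeterGroupToPushout_comp_coxeterPushoutToGroup M hunion hzero)

end

/-- Let `M` be a Coxeter matrix on `S`, and let `A, B ⊆ S` with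
`A ∪ B = S` and `M a b = 0` for every `a ∈ A \ B` and `b ∈ B \ A`. Then the Coxeter group
`W(M)` is isomorphic to the amalgamated free product `W(M|_A) ∗_{W(M|_{A ∩ B})} W(M|_B)`,
i.e. to the pushout of the canonical homomorphisms `W(M|_{A ∩ B}) → W(M|_A)` and
`W(M|_{A ∩ B}) → W(M|_B)`, via an isomorphism matching generators with generators. -/
theorem coxeterGroup_amalgam_of_separating_subset
    {S : Type*} (M : CoxeterMatrix S) (A B : Set S)
    (hunion : A ∪ B = Set.univ)
    (hzero : ∀ a ∈ A \ B, ∀ b ∈ B \ A, M a b = 0) :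
    ∃ e : M.Group ≃* Monoid.PushoutI (coxeterPushoutMaps M A B),
      (∀ (a : S) (ha : a ∈ A),
        e (M.simple a) =
          Monoid.PushoutI.of (φ := coxeterPushoutMaps M A B) true
            ((M.restrict A).simple ⟨a, ha⟩)) ∧
      (∀ (b : S) (hb : b ∈ B),
        e (M.simple b) =
          Monoid.PushoutI.of (φ := coxeterPushoutMaps M A B) false
            ((M.restrict B).simple ⟨b, hb⟩)) :=
  ⟨coxeterGroupEquivPushout M hunion hzero,
    fun a ha => (coxeterGroupToPushout_simple M hunion hzero a).trans
      (coxeterPushoutSimple_of_mem_left M hunion ha),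
    fun b hb => (coxeterGroupToPushout_simple M hunion hzero b).trans
      (coxeterPushoutSimple_of_mem_right M hunion hb)⟩
end

section
/- Let A and B be types, and let M be a Coxeter matrix on the sum type A ⊕ B whose restrictions to A and B are M_A and M_B, and which satisfies M (inl a) (inr b) = 0 for all a ∈ A and b ∈ B. Then the Coxeter group W(M) is isomorphic to the free product (coproduct) W(M_A) ∗ W(M_B), via an isomorphism sending the generator of W(M) indexed by inl a to the image of the generator indexed by a, and the generator indexed by inr b to the image of the generator indexed by b. -/
/-- Let `M` be a Coxeter matrix on a sum type `A ⊕ B` whose restrictions to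
`A` and `B` are `M_A` and `M_B`, and which satisfies `M (inl a) (inr b) = 0` for all `a, b`.
Then `W(M)` is isomorphic to the free product `W(M_A) ∗ W(M_B)`, matching generators with
the images of generators. -/
theorem coxeterGroup_free_product_of_labels_zero
    {A B : Type*} (M : CoxeterMatrix (A ⊕ B))
    (MA : CoxeterMatrix A) (MB : CoxeterMatrix B)
    (hA : ∀ a a' : A, M (Sum.inl a) (Sum.inl a') = MA a a')
    (hB : ∀ b b' : B, M (Sum.inr b) (Sum.inr b') = MB b b')
    (hAB : ∀ (a : A) (b : B), M (Sum.inl a) (Sum.inr b) = 0) :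
    ∃ e : M.Group ≃* Monoid.Coprod MA.Group MB.Group,
      (∀ a : A, e (M.simple (Sum.inl a)) = Monoid.Coprod.inl (MA.simple a)) ∧
      (∀ b : B, e (M.simple (Sum.inr b)) = Monoid.Coprod.inr (MB.simple b)) := by
  set cs := M.toCoxeterSystem
  set csA := MA.toCoxeterSystem
  set csB := MB.toCoxeterSystem
  have hBA : ∀ (b : B) (a : A), M (Sum.inr b) (Sum.inl a) = 0 := fun b a =>
    (M.symmetric _ _).symm.trans (hAB a b)
  have hf : M.IsLiftable (Sum.elim
      (fun a => (Monoid.Coprod.inl (MA.simple a) : Monoid.Coprod MA.Group MB.Group))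
      (fun b => Monoid.Coprod.inr (MB.simple b))) := by
    rintro (a | b) (a' | b')
    · rw [hA, Sum.elim_inl, Sum.elim_inl, ← map_mul, ← map_pow]
      exact (congrArg Monoid.Coprod.inl (csA.simple_mul_simple_pow a a')).trans (map_one _)
    · rw [hAB]; exact pow_zero _
    · rw [hBA]; exact pow_zero _
    · rw [hB, Sum.elim_inr, Sum.elim_inr, ← map_mul, ← map_pow]
      exact (congrArg Monoid.Coprod.inr (csB.simple_mul_simple_pow b b')).trans (map_one _)
  set f : M.Group →* Monoid.Coprod MA.Group MB.Group := cs.lift ⟨_, hf⟩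
  have hgA : MA.IsLiftable (fun a => M.simple (Sum.inl a)) := fun a a' => by
    rw [← hA]; exact cs.simple_mul_simple_pow _ _
  have hgB : MB.IsLiftable (fun b => M.simple (Sum.inr b)) := fun b b' => by
    rw [← hB]; exact cs.simple_mul_simple_pow _ _
  set g : Monoid.Coprod MA.Group MB.Group →* M.Group :=
    Monoid.Coprod.lift (csA.lift ⟨_, hgA⟩) (csB.lift ⟨_, hgB⟩)
  have sM : ∀ i, cs.simple i = M.simple i := fun _ => rfl
  have sA : ∀ a, csA.simple a = MA.simple a := fun _ => rfl
  have sB : ∀ b, csB.simple b = MB.simple b := fun _ => rfl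
  have liftA : ∀ a, (csA.lift ⟨_, hgA⟩) (MA.simple a) = M.simple (Sum.inl a) :=
    fun a => csA.lift_apply_simple hgA a
  have liftB : ∀ b, (csB.lift ⟨_, hgB⟩) (MB.simple b) = M.simple (Sum.inr b) :=
    fun b => csB.lift_apply_simple hgB b
  have hfs : ∀ i, f (M.simple i) = Sum.elim
      (fun a => (Monoid.Coprod.inl (MA.simple a) : Monoid.Coprod MA.Group MB.Group))
      (fun b => Monoid.Coprod.inr (MB.simple b)) i := fun i => cs.lift_apply_simple hf i
  have hgf : g.comp f = MonoidHom.id _ := by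
    apply cs.ext_simple
    rintro (a | b) <;>
      simp only [MonoidHom.comp_apply, MonoidHom.id_apply, sM, hfs, Sum.elim_inl, Sum.elim_inr,
        g, Monoid.Coprod.lift_apply_inl, Monoid.Coprod.lift_apply_inr, liftA, liftB]
  have hfg : f.comp g = MonoidHom.id _ := by
    apply Monoid.Coprod.hom_ext
    · apply csA.ext_simple
      intro a
      simp only [MonoidHom.comp_apply, MonoidHom.id_apply, sA, g,
        Monoid.Coprod.lift_apply_inl, liftA, hfs, Sum.elim_inl]
    · apply csB.ext_simple
      intro b
      simp only [MonoidHom.comp_apply, MonoidHom.id_apply, sB, g,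
        Monoid.Coprod.lift_apply_inr, liftB, hfs, Sum.elim_inr]
  refine ⟨MonoidHom.toMulEquiv f g hgf hfg, fun a => ?_, fun b => ?_⟩ <;>
    simp [MonoidHom.toMulEquiv, hfs]
end

section
/- Let M be a Coxeter matrix on a type S and let s, t ∈ S be distinct. Then the subgroup of the Coxeter group W(M) generated by the images of s and t is finite if and only if M s t ≠ 0. -/
/-!
Two involutions `a, b` generate a dihedral group, which is finite exactly when `a * b` has
finite order; for the simple reflections `s, t` that order divides `M s t` when `M s t ≠ 0`.
When `M s t = 0`, the geometric representation of `W(M)` on `ℝ^(S)` sends `s` and `t` to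
reflections `r_s, r_t` with `⟨α_s, α_t⟩ = -1`, so `r_s r_t` acts as a nontrivial shear on the
plane spanned by `α_s, α_t` and has infinite order. That the geometric representation exists
at all, i.e. `(r_i r_j) ^ m = 1` for `m = M i j` finite, follows from the formula for powers of
a product of two reflections in terms of Chebyshev polynomials evaluated at `2 cos (2π / m)`.
-/

open Real Polynomial.Chebyshev

lemma Real.sin_two_pi_div_pos {m : ℕ} (hm : 3 ≤ m) : 0 < sin (2 * π / m) := by
  have : (2 : ℝ) < m := by exact_mod_cast hm
  exact sin_pos_of_pos_of_lt_pi (by positivity)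
    ((div_lt_iff₀ (by positivity)).2 (by nlinarith [pi_pos]))

namespace Polynomial.Chebyshev

lemma S_sub_one_eval_two_mul_cos_two_pi_div_even {k : ℕ} (hk : 2 ≤ k) :
    (S ℝ (k - 1)).eval (2 * cos (2 * π / (2 * k : ℕ))) = 0 := by
  have h := S_two_mul_real_cos (2 * π / (2 * k : ℕ)) (k - 1)
  have hk0 : (k : ℝ) ≠ 0 := by positivity
  rw [show ((((k : ℤ) - 1 : ℤ) : ℝ) + 1) * (2 * π / (2 * k : ℕ)) = π by push_cast; field_simp; ring,
    sin_pi] at h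
  exact (mul_eq_zero.mp h).resolve_right (sin_two_pi_div_pos (by omega)).ne'

lemma S_add_S_sub_one_eval_two_mul_cos_two_pi_div_odd {k : ℕ} (hk : 1 ≤ k) :
    (S ℝ k).eval (2 * cos (2 * π / (2 * k + 1 : ℕ))) +
      (S ℝ (k - 1)).eval (2 * cos (2 * π / (2 * k + 1 : ℕ))) = 0 := by
  set φ := 2 * π / (2 * k + 1 : ℕ)
  have h₁ := S_two_mul_real_cos φ k
  have h₂ := S_two_mul_real_cos φ (k - 1)
  have hφ : ((k : ℝ) + 1) * φ = 2 * π - k * φ := by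
    simp only [φ]; push_cast; field_simp; ring
  push_cast at h₁ h₂
  rw [hφ, sin_two_pi_sub] at h₁
  rw [sub_add_cancel] at h₂
  have hsum : ((S ℝ k).eval (2 * cos φ) + (S ℝ (k - 1)).eval (2 * cos φ)) * sin φ = 0 := by
    rw [add_mul, h₁, h₂, neg_add_cancel]
  exact (mul_eq_zero.mp hsum).resolve_right (sin_two_pi_div_pos (by omega)).ne'

end Polynomial.Chebyshev

namespace Module

section Real

variable {V : Type*} [AddCommGroup V] [Module ℝ V] {x y : V} {f g : Dual ℝ V}

/-- In `Module.reflection_mul_reflection_pow`, at `t = 2 cos (2π / m)` both coefficients are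
products with a vanishing factor: `S_{k-1}(t)` if `m = 2k`, `S_k(t) + S_{k-1}(t)` if
`m = 2k + 1`. -/
theorem reflection_mul_reflection_pow_eq_one (hf : f x = 2) (hg : g y = 2) {m : ℕ} (hm : 3 ≤ m)
    (hfg : f y * g x = 4 * cos (π / m) ^ 2) :
    (reflection hf * reflection hg) ^ m = 1 := by
  set t := 2 * cos (2 * π / m)
  have ht : t = f y * g x - 2 := by
    rw [hfg, cos_sq, ← mul_div_assoc]; ring
  suffices hS : (S ℝ ((m - 2 : ℤ) / 2)).eval t *
        ((S ℝ ((m - 1 : ℤ) / 2)).eval t + (S ℝ ((m - 3 : ℤ) / 2)).eval t) = 0 ∧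
      (S ℝ ((m - 1 : ℤ) / 2)).eval t *
        ((S ℝ ((m : ℤ) / 2)).eval t + (S ℝ ((m - 2 : ℤ) / 2)).eval t) = 0 by
    apply LinearEquiv.toLinearMap_injective
    rw [reflection_mul_reflection_pow hf hg m t ht, hS.1, hS.2]
    simp
  obtain ⟨k, rfl | rfl⟩ := Nat.even_or_odd' m
  · have h0 := S_sub_one_eval_two_mul_cos_two_pi_div_even (k := k) (by omega)
    rw [show ((2 * k : ℕ) - 2 : ℤ) / 2 = k - 1 by omega,
      show ((2 * k : ℕ) - 1 : ℤ) / 2 = k - 1 by omega]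
    simp only [t, h0, zero_mul, and_self]
  · have h0 := S_add_S_sub_one_eval_two_mul_cos_two_pi_div_odd (k := k) (by omega)
    rw [show ((2 * k + 1 : ℕ) - 2 : ℤ) / 2 = k - 1 by omega,
      show ((2 * k + 1 : ℕ) - 1 : ℤ) / 2 = k by omega,
      show ((2 * k + 1 : ℕ) - 3 : ℤ) / 2 = k - 1 by omega,
      show ((2 * k + 1 : ℕ) : ℤ) / 2 = k by omega]
    simp only [t, h0, mul_zero, and_self]

theorem reflection_mul_reflection_sq_eq_one (hf : f x = 2) (hg : g y = 2) (hfy : f y = 0)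
    (hgx : g x = 0) : (reflection hf * reflection hg) ^ 2 = 1 := by
  ext z
  simp [sq, reflection_apply, hf, hg, hfy, hgx]
  module

end Real

theorem not_isOfFinOrder_reflection_mul_reflection {R W : Type*} [CommRing R] [AddCommGroup W]
    [Module R W] [IsAddTorsionFree W] {x y : W} {f g : Dual R W} (hf : f x = 2) (hg : g y = 2)
    (hfg : f y * g x = 4) (hne : f y • x ≠ (2 : R) • y) :
    ¬ IsOfFinOrder (reflection hf * reflection hg) := by
  intro h
  obtain ⟨n, hn, hpow⟩ := h.exists_pow_eq_one
  have hiter := reflection_reflection_iterate hf hg hfg n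
  rw [← LinearEquiv.mul_eq_trans, ← LinearEquiv.coe_pow, hpow, LinearEquiv.coe_one, id,
    left_eq_add, nsmul_eq_zero_iff_right hn.ne', sub_eq_zero] at hiter
  exact hne hiter

end Module

theorem mul_zpow_eq_zpow_neg_mul {G : Type*} [Group G] {a b : G} (ha : a * a = 1)
    (hb : b * b = 1) (k : ℤ) : a * (a * b) ^ k = (a * b) ^ (-k) * a := by
  have hconj : a * (a * b) * a⁻¹ = (a * b)⁻¹ := by
    rw [mul_inv_rev, inv_eq_of_mul_eq_one_left ha, inv_eq_of_mul_eq_one_left hb, ← mul_assoc, ha,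
      one_mul]
  rw [zpow_neg, ← inv_zpow, ← hconj, conj_zpow, inv_mul_cancel_right]

namespace Subgroup

variable {G : Type*} [Group G] {a b : G}

theorem finite_closure_pair_of_isOfFinOrder_mul (ha : a * a = 1) (hb : b * b = 1)
    (hab : IsOfFinOrder (a * b)) : Finite (closure {a, b}) := by
  set w := a * b
  let P : G → Prop := fun x ↦ ∃ k : ℤ, x = w ^ k ∨ x = w ^ k * a
  have mul_a : ∀ y, P y → P (a * y) := by
    rintro y ⟨k, rfl | rfl⟩
    · exact ⟨-k, Or.inr (mul_zpow_eq_zpow_neg_mul ha hb k)⟩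
    · refine ⟨-k, Or.inl ?_⟩
      rw [← mul_assoc, mul_zpow_eq_zpow_neg_mul ha hb, mul_assoc, ha, mul_one]
  have mul_w : ∀ y, P y → P (w * y) := by
    rintro y ⟨k, rfl | rfl⟩
    · exact ⟨1 + k, Or.inl (zpow_one_add w k).symm⟩
    · exact ⟨1 + k, Or.inr (by rw [zpow_one_add, ← mul_assoc])⟩
  have mul_gen : ∀ c ∈ ({a, b} : Set G), ∀ y, P y → P (c * y) := by
    rintro c (rfl | rfl) y hy
    · exact mul_a y hy
    · rw [show c = a * w by rw [← mul_assoc, ha, one_mul], mul_assoc]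
      exact mul_a _ (mul_w y hy)
  have hP : ∀ x ∈ closure {a, b}, P x := by
    intro x hx
    induction hx using closure_induction_left with
    | one => exact ⟨0, Or.inl (zpow_zero w).symm⟩
    | mul_left c hc y _ ih => exact mul_gen c hc y ih
    | inv_mul_cancel c hc y _ ih =>
      have hc' : c⁻¹ = c := by
        rcases hc with rfl | rfl
        exacts [inv_eq_of_mul_eq_one_left ha, inv_eq_of_mul_eq_one_left hb]
      rw [hc']
      exact mul_gen c hc y ih
  have hT : ((zpowers w : Set G) ∪ (· * a) '' zpowers w).Finite :=
    hab.finite_zpowers.union (hab.finite_zpowers.image _)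
  refine Set.Finite.to_subtype (hT.subset fun x hx ↦ ?_)
  obtain ⟨k, rfl | rfl⟩ := hP x hx
  · exact Or.inl ⟨k, rfl⟩
  · exact Or.inr ⟨w ^ k, ⟨k, rfl⟩, rfl⟩

theorem finite_closure_pair_iff_isOfFinOrder_mul (ha : a * a = 1) (hb : b * b = 1) :
    Finite (closure {a, b}) ↔ IsOfFinOrder (a * b) := by
  refine ⟨fun _ ↦ ?_, finite_closure_pair_of_isOfFinOrder_mul ha hb⟩
  have hmem : a * b ∈ closure {a, b} :=
    mul_mem (subset_closure (Set.mem_insert a _)) (subset_closure (Set.mem_insert_of_mem a rfl))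
  exact (closure {a, b}).subtype.isOfFinOrder (isOfFinOrder_of_finite ⟨a * b, hmem⟩)

end Subgroup

namespace CoxeterMatrix

open Finsupp Module

variable {B : Type*} (M : CoxeterMatrix B)

/-- `2 ⟨α_i, -⟩` for the geometric bilinear form `⟨α_i, α_j⟩ = -cos (π / M i j)`. When
`M i j = 0`, Lean's `π / 0 = 0` gives `⟨α_i, α_j⟩ = -1`, the standard value for `m = ∞`. -/
noncomputable def coroot (i : B) : Dual ℝ (B →₀ ℝ) :=
  linearCombination ℝ fun j ↦ -2 * cos (π / M i j)

lemma coroot_single (i j : B) : M.coroot i (single j 1) = -2 * cos (π / M i j) := by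
  simp [coroot]

lemma coroot_single_self (i : B) : M.coroot i (single i 1) = 2 := by
  simp [coroot_single]

noncomputable def geometricReflection (i : B) : (B →₀ ℝ) ≃ₗ[ℝ] (B →₀ ℝ) :=
  reflection (M.coroot_single_self i)

theorem isLiftable_geometricReflection : M.IsLiftable M.geometricReflection := by
  intro i j
  obtain rfl | hij := eq_or_ne i j
  · rw [M.diagonal, pow_one]
    exact LinearEquiv.ext fun z ↦ involutive_reflection (M.coroot_single_self i) z
  obtain h0 | h2 | h3 : M i j = 0 ∨ M i j = 2 ∨ 3 ≤ M i j := by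
    have := M.off_diagonal i j hij; omega
  · rw [h0, pow_zero]
  · rw [h2]
    refine reflection_mul_reflection_sq_eq_one _ _ ?_ ?_ <;>
      simp [coroot_single, h2, M.symmetric j i]
  · refine reflection_mul_reflection_pow_eq_one _ _ h3 ?_
    rw [coroot_single, coroot_single, M.symmetric j i]
    ring

theorem not_isOfFinOrder_geometricReflection_mul {i j : B} (h : M i j = 0) :
    ¬ IsOfFinOrder (M.geometricReflection i * M.geometricReflection j) := by
  have hij : i ≠ j := by rintro rfl; simp at h
  refine not_isOfFinOrder_reflection_mul_reflection _ _ ?_ fun heq ↦ ?_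
  · norm_num [coroot_single, h, M.symmetric j i]
  · simpa [coroot_single, h, hij] using congr($heq j)

theorem isOfFinOrder_simple_mul_simple_iff (i j : B) :
    IsOfFinOrder (M.simple i * M.simple j) ↔ M i j ≠ 0 := by
  refine ⟨fun h h0 ↦ ?_, fun h ↦
    isOfFinOrder_iff_pow_eq_one.mpr ⟨M i j, Nat.pos_of_ne_zero h,
      M.toCoxeterSystem.simple_mul_simple_pow i j⟩⟩
  let ρ := M.toCoxeterSystem.lift ⟨_, M.isLiftable_geometricReflection⟩
  have hρ : ρ (M.simple i * M.simple j) = M.geometricReflection i * M.geometricReflection j := by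
    rw [map_mul, ← M.toCoxeterSystem_simple]
    simp only [ρ, CoxeterSystem.lift_apply_simple]
  exact M.not_isOfFinOrder_geometricReflection_mul h0 (hρ ▸ ρ.isOfFinOrder h)

end CoxeterMatrix

theorem coxeterGroup_closure_pair_finite_iff_general
    {S : Type*} (M : CoxeterMatrix S) (s t : S) :
    Finite (Subgroup.closure {M.simple s, M.simple t} : Subgroup M.Group) ↔ M s t ≠ 0 :=
  (Subgroup.finite_closure_pair_iff_isOfFinOrder_mul
    (M.toCoxeterSystem.simple_mul_simple_self s) (M.toCoxeterSystem.simple_mul_simple_self t)).trans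
    (M.isOfFinOrder_simple_mul_simple_iff s t)

/-- Let `M` be a Coxeter matrix on a type `S` and let `s, t ∈ S` be distinct.
The subgroup of the Coxeter group `W(M)` generated by the images of `s` and `t` is finite
if and only if `M s t ≠ 0`. -/
theorem coxeterGroup_closure_pair_finite_iff
    {S : Type*} (M : CoxeterMatrix S) (s t : S) (hst : s ≠ t) :
    Finite (Subgroup.closure {M.simple s, M.simple t} : Subgroup M.Group) ↔ M s t ≠ 0 :=
  coxeterGroup_closure_pair_finite_iff_general M s t
end
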